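/- Let (D,v) be a positive cooperative game. The proportional values satisfy the equal proportional gains property: for every A ⊆ D and all distinct i, j ∈ A, PV_i(A,v)·PV_i(A\{j},v)^{-1} = PV_j(A,v)·PV_j(A\{i},v)^{-1}; equivalently PV_i(A,v)·PV_j(A\{i},v) = PV_j(A,v)·PV_i(A\{j},v). -/

import Mathlib

open Finset

/-- The ratio potential `R(A, v)` of a cooperative game, defined recursively by
`R(∅, v) = 1` and `R(A, v) = v(A) · (Σ_{j∈A} R(A\{j}, v)⁻¹)⁻¹` for nonempty `A`. -/
noncomputable def ratioPot {d : ℕ} (v : Finset (Fin d) → ℝ) (A : Finset (Fin d)) : ℝ :=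
  if A = ∅ then 1
  else v A * (∑ j ∈ A.attach, (ratioPot v (A.erase j.1))⁻¹)⁻¹
termination_by A.card
decreasing_by exact Finset.card_erase_lt_of_mem j.2

/-- The proportional value `PV_i(A, v) = R(A, v)/R(A\{i}, v)` of player `i` in the subgame
of a positive cooperative game on the coalition `A`. -/
noncomputable def pvSub {d : ℕ} (v : Finset (Fin d) → ℝ) (A : Finset (Fin d)) (i : Fin d) :
    ℝ :=
  ratioPot v A / ratioPot v (A.erase i)

/-! The equal proportional gains property is a telescoping identity: both
`PV_i(A) · PV_j(A\{i})` and `PV_j(A) · PV_i(A\{j})` equal `R(A) / R(A\{i,j})`, so the only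
input is that the ratio potential of a positive game never vanishes. -/

section PositiveGame

variable {d : ℕ} {v : Finset (Fin d) → ℝ}

theorem ratioPot_pos (hpos : ∀ A : Finset (Fin d), A ≠ ∅ → 0 < v A) (A : Finset (Fin d)) :
    0 < ratioPot v A := by
  induction A using Finset.strongInduction with
  | _ A ih =>
    rw [ratioPot]
    split_ifs with hA
    · exact one_pos
    · have hsum : 0 < ∑ j ∈ A.attach, (ratioPot v (A.erase j.1))⁻¹ :=
        Finset.sum_pos (fun j _ => inv_pos.2 (ih _ (Finset.erase_ssubset j.2)))
          (Finset.attach_nonempty_iff.2 (Finset.nonempty_iff_ne_empty.2 hA))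
      exact mul_pos (hpos A hA) (inv_pos.2 hsum)

theorem pvSub_pos (hpos : ∀ A : Finset (Fin d), A ≠ ∅ → 0 < v A) (A : Finset (Fin d))
    (i : Fin d) : 0 < pvSub v A i :=
  div_pos (ratioPot_pos hpos A) (ratioPot_pos hpos _)

theorem pvSub_mul_pvSub_erase {A : Finset (Fin d)} {i : Fin d}
    (h : ratioPot v (A.erase i) ≠ 0) (j : Fin d) :
    pvSub v A i * pvSub v (A.erase i) j = ratioPot v A / ratioPot v ((A.erase i).erase j) :=
  div_mul_div_cancel₀ h

end PositiveGame

theorem pv_equal_proportional_gains_general {d : ℕ} (v : Finset (Fin d) → ℝ)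
    (hpos : ∀ A : Finset (Fin d), A ≠ ∅ → 0 < v A)
    (A : Finset (Fin d)) (i j : Fin d) :
    pvSub v A i * (pvSub v (A.erase j) i)⁻¹ = pvSub v A j * (pvSub v (A.erase i) j)⁻¹ ∧
    pvSub v A i * pvSub v (A.erase i) j = pvSub v A j * pvSub v (A.erase j) i := by
  have hprod : pvSub v A i * pvSub v (A.erase i) j = pvSub v A j * pvSub v (A.erase j) i := by
    rw [pvSub_mul_pvSub_erase (ratioPot_pos hpos _).ne',
      pvSub_mul_pvSub_erase (ratioPot_pos hpos _).ne', Finset.erase_right_comm]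
  refine ⟨?_, hprod⟩
  rw [← div_eq_mul_inv, ← div_eq_mul_inv,
    div_eq_div_iff (pvSub_pos hpos _ _).ne' (pvSub_pos hpos _ _).ne']
  exact hprod

/-- the proportional values of a positive cooperative game satisfy the equal
proportional gains property, in both equivalent formulations. -/
theorem pv_equal_proportional_gains {d : ℕ} (v : Finset (Fin d) → ℝ) (hv0 : v ∅ = 0)
    (hpos : ∀ A : Finset (Fin d), A ≠ ∅ → 0 < v A)
    (A : Finset (Fin d)) (i j : Fin d) (hi : i ∈ A) (hj : j ∈ A) (hij : i ≠ j) :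
    pvSub v A i * (pvSub v (A.erase j) i)⁻¹ = pvSub v A j * (pvSub v (A.erase i) j)⁻¹ ∧
    pvSub v A i * pvSub v (A.erase i) j = pvSub v A j * pvSub v (A.erase j) i :=
  pv_equal_proportional_gains_general v hpos A i j
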